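/- arXiv:2504.02376 — 3 statements merged into one kernel-verified Lean document; each statement's English description precedes it below -/
import Mathlib

section
/- For every i ≥ 0 and every state s, V_i(s) = V^-_i(F(s)), where F(s) is the reduced state obtained from s by deleting all clusters with η(i) = 0 and listing the remaining cluster sizes in ascending order, and V^-_i are the value-iteration iterates of the reduced Goal-MDP whose transition probabilities are P^-(s' | s, p) = ∑_{s̃ : F(s̃) = s'} P(s̃ | s, p). -/
open scoped BigOperators

/-- A state of the reservation process: `s.1 + 1` clusters (so at least one),
with the number of active terminals in each cluster given by `s.2`. -/
abbrev RState : Type := Σ m : ℕ, (Fin (m + 1) → ℕ)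

/-- `sN s` is the total number of active terminals in state `s`. -/
def sN (s : RState) : ℕ := ∑ j, s.2 j

/-- An action assigns a transmission probability to each cluster; we record it as a
function on `ℕ` and require it to take values in `[0,1]` on the first `M` coordinates. -/
def IsActionOn (M : ℕ) (p : ℕ → ℝ) : Prop := ∀ j < M, 0 ≤ p j ∧ p j ≤ 1

/-- The splitting weight `w(η, η', p)`: the probability that in each cluster `i` exactly
`η' i` of the `η i` terminals do not transmit, each terminal of cluster `i`
transmitting independently with probability `p i`. -/
noncomputable def w {M : ℕ} (η η' : Fin M → ℕ) (p : ℕ → ℝ) : ℝ :=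
  ∏ i, (Nat.choose (η i) (η' i) : ℝ) * (1 - p i.val) ^ (η' i) * (p i.val) ^ (η i - η' i)

/-- The possible outcomes at state `s`: a choice, for each cluster, of how many
terminals do not transmit (at most the cluster size). -/
abbrev Outcome (s : RState) : Type := ∀ j : Fin (s.1 + 1), Fin (s.2 j + 1)

/-- The cluster configuration `η'` of non-transmitters determined by an outcome. -/
def outEta {s : RState} (f : Outcome s) : Fin (s.1 + 1) → ℕ := fun j => (f j : ℕ)

/-- The next state resulting from state `s` when `η' j` terminals of cluster `j` kept
silent: idle (no transmitter) and success (one transmitter) keep the clusters, while a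
collision (at least two transmitters) moves all colliding terminals to a new cluster. -/
def step (s : RState) (η' : Fin (s.1 + 1) → ℕ) : RState :=
  if (∑ j, (s.2 j - η' j)) ≤ 1 then ⟨s.1, η'⟩
  else ⟨s.1 + 1, Fin.snoc η' (∑ j, (s.2 j - η' j))⟩

/-- Transition probability `P(s' | s, p)` of the reservation process. -/
noncomputable def transP (s : RState) (p : ℕ → ℝ) (s' : RState) : ℝ :=
  ∑ f : Outcome s, if step s (outEta f) = s' then w s.2 (outEta f) p else 0

/-- The value-iteration iterates `V_i` of the genie-aided Goal-MDP:
`V_0 = 0`; target states (no active terminals) have value `0`; otherwise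
`V_{i+1}(s)` is the infimum over actions of `1 + ∑_{s'} P(s' | s, p) V_i(s')`. -/
noncomputable def Vit : ℕ → RState → ℝ
  | 0, _ => 0
  | i + 1, s =>
    if sN s = 0 then 0
    else sInf { x : ℝ | ∃ p : ℕ → ℝ, IsActionOn (s.1 + 1) p ∧
      x = 1 + ∑ f : Outcome s, w s.2 (outEta f) p * Vit i (step s (outEta f)) }

/-- The state obtained from a list of cluster sizes (a nonempty list `l` yields the
state with `l.length` clusters whose sizes are the entries of `l`, in order). -/
def ofList (l : List ℕ) : RState := ⟨l.length - 1, fun i => l.getD i.val 0⟩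

/-- The reduction map `F`: delete all clusters containing zero terminals and list the
remaining cluster sizes in ascending order.  A reduced state is recorded as the sorted
list of its (positive) cluster sizes; the empty list represents the target. -/
def reduceF (s : RState) : List ℕ :=
  List.insertionSort (· ≤ ·) ((List.ofFn s.2).filter (fun n => n ≠ 0))

/-- The value-iteration iterates `V⁻_i` of the reduced Goal-MDP, whose transition
probabilities are `P⁻(s' | s, p) = ∑_{s̃ : F(s̃) = s'} P(s̃ | s, p)`; equivalently, the
Bellman expectation is `∑_{η'} w(η, η', p) · V⁻_i(F(step(s, η')))`. -/
noncomputable def Vred : ℕ → List ℕ → ℝ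
  | 0, _ => 0
  | i + 1, l =>
    if l.sum = 0 then 0
    else sInf { x : ℝ | ∃ p : ℕ → ℝ, IsActionOn ((ofList l).1 + 1) p ∧
      x = 1 + ∑ f : Outcome (ofList l),
        w (ofList l).2 (outEta f) p * Vred i (reduceF (step (ofList l) (outEta f))) }

/-!
A Bellman step only sees the multiset of nonempty cluster sizes. Suppose the clusters of `t`
sit injectively among those of `s` with the same sizes and every other cluster of `s` is empty.
Restricting outcomes along this embedding is then a bijection that preserves the splitting
weight, the number of transmitters and hence, after reduction, the successor state; so the
Bellman sums of `s` and `t` agree for corresponding actions, and actions transfer in both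
directions (by restriction, and by extension by zero). The state `ofList (reduceF s)` embeds in
this way into `s`: `reduceF s` is a subpermutation of the cluster sizes of `s` with the same
total, so the clusters it misses are empty. Induction on `i` finishes the proof.
-/

open Function

section NonzeroValues

variable {α β : Type*} [Fintype α] [Fintype β]

def nonzeroValues (g : α → ℕ) : Multiset ℕ :=
  (Finset.univ.val.map g).filter (· ≠ 0)

theorem nonzeroValues_comp {ι : β → α} (hι : Injective ι) {g : α → ℕ}
    (hg : ∀ a ∉ Set.range ι, g a = 0) : nonzeroValues (g ∘ ι) = nonzeroValues g := by
  have hsupp : Finset.univ.filter (fun a => g a ≠ 0)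
      = (Finset.univ.filter (fun b => g (ι b) ≠ 0)).map ⟨ι, hι⟩ := by
    ext a
    simp only [Finset.mem_filter, Finset.mem_univ, true_and, Finset.mem_map,
      Embedding.coeFn_mk]
    refine ⟨fun ha => ?_, fun ⟨b, hb, hba⟩ => hba ▸ hb⟩
    obtain ⟨b, rfl⟩ : a ∈ Set.range ι := by_contra fun h => ha (hg a h)
    exact ⟨b, ha, rfl⟩
  simp only [nonzeroValues, Multiset.filter_map]
  change Multiset.map (g ∘ ι) (Finset.univ.filter fun b => g (ι b) ≠ 0).val
    = Multiset.map g (Finset.univ.filter fun a => g a ≠ 0).val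
  rw [hsupp, Finset.map_val, Multiset.map_map]
  rfl

theorem nonzeroValues_snoc {n : ℕ} (g : Fin n → ℕ) {x : ℕ} (hx : x ≠ 0) :
    nonzeroValues (Fin.snoc g x : Fin (n + 1) → ℕ) = x ::ₘ nonzeroValues g := by
  have hmap : Finset.univ.val.map (Fin.snoc g x : Fin (n + 1) → ℕ)
      = x ::ₘ Finset.univ.val.map g := by
    simp only [Fin.univ_val_map, List.ofFn_succ', Fin.snoc_castSucc, Fin.snoc_last,
      List.concat_eq_append]
    exact Multiset.coe_eq_coe.2 (List.perm_append_singleton _ _)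
  rw [nonzeroValues, hmap, Multiset.filter_cons_of_pos (p := (· ≠ 0)) _ hx, nonzeroValues]

theorem eq_zero_of_sum_comp_eq {ι : β → α} (hι : Injective ι) {g : α → ℕ}
    (hsum : ∑ b, g (ι b) = ∑ a, g a) {a : α} (ha : a ∉ Set.range ι) : g a = 0 := by
  classical
  set S := Finset.univ.map ⟨ι, hι⟩
  have hrest : ∑ a ∈ Sᶜ, g a = 0 := by
    have := Finset.sum_add_sum_compl S g
    rw [Finset.sum_map] at this
    simp only [Embedding.coeFn_mk] at this
    lia
  refine Finset.sum_eq_zero_iff.1 hrest a ?_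
  simpa [S] using ha

end NonzeroValues

theorem coe_reduceF (s : RState) : (reduceF s : Multiset ℕ) = nonzeroValues s.2 := by
  rw [reduceF, Multiset.coe_eq_coe.2 (List.perm_insertionSort _ _), ← Multiset.filter_coe,
    nonzeroValues, Fin.univ_val_map]

theorem reduceF_eq_of_nonzeroValues_eq {s t : RState}
    (h : nonzeroValues s.2 = nonzeroValues t.2) : reduceF s = reduceF t :=
  List.Perm.eq_of_sortedLE List.sortedLE_insertionSort List.sortedLE_insertionSort
    (Multiset.coe_eq_coe.1 (by rw [coe_reduceF, coe_reduceF, h]))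

theorem sum_reduceF (s : RState) : (reduceF s).sum = sN s := by
  rw [← Multiset.sum_coe, coe_reduceF, nonzeroValues, Multiset.filter_map, ← Finset.filter_val,
    ← Finset.sum_eq_multiset_sum]
  exact Finset.sum_filter_ne_zero (f := s.2) _

theorem exists_isActionOn_extending {m : ℕ} (f : Fin m → ℝ) (hf : ∀ i, 0 ≤ f i ∧ f i ≤ 1) :
    ∃ p : ℕ → ℝ, IsActionOn m p ∧ ∀ i : Fin m, p i = f i := by
  refine ⟨fun k => if h : k < m then f ⟨k, h⟩ else 0, fun k hk => ?_, fun i => dif_pos i.isLt⟩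
  simpa only [dif_pos hk] using hf ⟨k, hk⟩

def bellmanValues (s : RState) (G : List ℕ → ℝ) : Set ℝ :=
  { x | ∃ p : ℕ → ℝ, IsActionOn (s.1 + 1) p ∧
    x = 1 + ∑ f : Outcome s, w s.2 (outEta f) p * G (reduceF (step s (outEta f))) }

structure ClusterEmbedding (t s : RState) where
  toFun : Fin (t.1 + 1) → Fin (s.1 + 1)
  injective : Injective toFun
  size_eq : ∀ i, s.2 (toFun i) = t.2 i
  size_eq_zero : ∀ j ∉ Set.range toFun, s.2 j = 0

namespace ClusterEmbedding

variable {s t : RState} (e : ClusterEmbedding t s)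

instance : CoeFun (ClusterEmbedding t s) (fun _ => Fin (t.1 + 1) → Fin (s.1 + 1)) :=
  ⟨toFun⟩

theorem sum_sub_comp (η' : Fin (s.1 + 1) → ℕ) :
    ∑ i, (t.2 i - η' (e i)) = ∑ j, (s.2 j - η' j) :=
  Fintype.sum_of_injective e e.injective _ _
    (fun j hj => by rw [e.size_eq_zero j hj, Nat.zero_sub]) (fun i => by rw [e.size_eq])

theorem reduceF_step_comp (η' : Fin (s.1 + 1) → ℕ) (hη' : ∀ j ∉ Set.range e, η' j = 0) :
    reduceF (step t (η' ∘ e)) = reduceF (step s η') := by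
  have hvals : nonzeroValues (η' ∘ e) = nonzeroValues η' := nonzeroValues_comp e.injective hη'
  unfold step
  simp only [comp_apply, e.sum_sub_comp η']
  split_ifs with h
  · exact reduceF_eq_of_nonzeroValues_eq hvals
  · refine reduceF_eq_of_nonzeroValues_eq ?_
    simp only [nonzeroValues_snoc _ (show ∑ j, (s.2 j - η' j) ≠ 0 by lia)]
    rw [← hvals]

def restrict (f : Outcome s) : Outcome t :=
  fun i => Fin.cast (by rw [e.size_eq]) (f (e i))

theorem outEta_restrict (f : Outcome s) : outEta (e.restrict f) = outEta f ∘ e := rfl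

theorem outEta_eq_zero (f : Outcome s) {j : Fin (s.1 + 1)} (hj : j ∉ Set.range e) :
    outEta f j = 0 := by
  have hlt := (f j).isLt
  have hzero := e.size_eq_zero j hj
  change (f j : ℕ) = 0
  lia

theorem card_outcome (e : ClusterEmbedding t s) :
    Fintype.card (Outcome t) = Fintype.card (Outcome s) := by
  simp only [Fintype.card_pi, Fintype.card_fin]
  exact Fintype.prod_of_injective e e.injective _ _
    (fun j hj => by rw [e.size_eq_zero j hj, zero_add]) (fun i => by rw [e.size_eq])

theorem restrict_bijective (e : ClusterEmbedding t s) : Bijective e.restrict := by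
  refine (Fintype.bijective_iff_injective_and_card _).2 ⟨fun f₁ f₂ h => ?_, e.card_outcome.symm⟩
  funext j
  apply Fin.ext
  by_cases hj : j ∈ Set.range e
  · obtain ⟨i, rfl⟩ := hj
    exact congrFun (congrArg outEta h) i
  · exact (e.outEta_eq_zero f₁ hj).trans (e.outEta_eq_zero f₂ hj).symm

theorem w_restrict {p q : ℕ → ℝ} (hpq : ∀ i : Fin (t.1 + 1), q i = p (e i)) (f : Outcome s) :
    w t.2 (outEta (e.restrict f)) q = w s.2 (outEta f) p :=
  Fintype.prod_of_injective e e.injective _ _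
    (fun j hj => by simp [e.size_eq_zero j hj, e.outEta_eq_zero f hj])
    (fun i => by rw [e.outEta_restrict, comp_apply, hpq, e.size_eq])

theorem sum_outcome_eq {p q : ℕ → ℝ} (hpq : ∀ i : Fin (t.1 + 1), q i = p (e i))
    (G : List ℕ → ℝ) :
    ∑ f : Outcome t, w t.2 (outEta f) q * G (reduceF (step t (outEta f)))
      = ∑ f : Outcome s, w s.2 (outEta f) p * G (reduceF (step s (outEta f))) :=
  (Fintype.sum_bijective e.restrict e.restrict_bijective _ _ fun f => by
    rw [e.w_restrict hpq, e.outEta_restrict,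
      e.reduceF_step_comp _ fun j hj => e.outEta_eq_zero f hj]).symm

theorem bellmanValues_eq (e : ClusterEmbedding t s) (G : List ℕ → ℝ) :
    bellmanValues t G = bellmanValues s G := by
  ext x
  constructor
  · rintro ⟨q, hq, rfl⟩
    classical
    obtain ⟨p, hp, hpq⟩ := exists_isActionOn_extending
      (extend e (fun i => q i) 0) fun j => by
        by_cases hj : ∃ i, e i = j
        · obtain ⟨i, rfl⟩ := hj
          rw [e.injective.extend_apply]
          exact hq i i.isLt
        · rw [extend_apply' _ _ _ hj]
          exact ⟨le_rfl, zero_le_one⟩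
    refine ⟨p, hp, ?_⟩
    rw [e.sum_outcome_eq (p := p) fun i => by rw [hpq, e.injective.extend_apply]]
  · rintro ⟨p, hp, rfl⟩
    obtain ⟨q, hq, hpq⟩ := exists_isActionOn_extending (fun i => p (e i)) fun i =>
      hp _ (e i).isLt
    exact ⟨q, hq, by rw [e.sum_outcome_eq hpq]⟩

end ClusterEmbedding

def ClusterEmbedding.ofReduceF (s : RState) (hs : sN s ≠ 0) :
    ClusterEmbedding (ofList (reduceF s)) s := by
  set l := reduceF s with hl
  have hlen : (ofList l).1 + 1 = l.length := by
    have hpos : 0 < l.length :=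
      List.length_pos_iff.2 fun h => hs (by rw [← sum_reduceF, ← hl, h, List.sum_nil])
    simp only [ofList]
    lia
  have hsub : l.Subperm (List.ofFn s.2) :=
    (List.perm_insertionSort _ _).subperm.trans List.filter_sublist.subperm
  let idx : Fin l.length → Fin (s.1 + 1) := fun k => Fin.cast List.length_ofFn (hsub.idxInj k)
  have hidx : ∀ k, s.2 (idx k) = l[(k : ℕ)] := fun k => by
    have h := hsub.getElem_idxInj_eq_getElem (i := k)
    rwa [List.getElem_ofFn] at h
  let ι : Fin ((ofList l).1 + 1) → Fin (s.1 + 1) := fun i => idx (Fin.cast hlen i)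
  have hι : Injective ι := fun i j h => by
    simpa using hsub.idxInj_injective (Fin.cast_injective _ h)
  have hsize : ∀ i, s.2 (ι i) = (ofList l).2 i := fun i => by
    change s.2 (ι i) = l.getD i 0
    rw [List.getD_eq_getElem?_getD, List.getElem?_eq_getElem (hlen ▸ i.isLt)]
    exact hidx _
  have hsum : ∑ i, s.2 (ι i) = ∑ j, s.2 j :=
    calc ∑ i, s.2 (ι i) = ∑ k : Fin l.length, s.2 (idx k) :=
          Fin.sum_congr' (fun k => s.2 (idx k)) hlen
      _ = ∑ k : Fin l.length, l[(k : ℕ)] := Fintype.sum_congr _ _ hidx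
      _ = l.sum := by rw [← List.sum_ofFn, List.ofFn_getElem]
      _ = ∑ j, s.2 j := sum_reduceF s
  exact ⟨ι, hι, hsize, fun j hj => eq_zero_of_sum_comp_eq hι hsum hj⟩

/-- **Theorem 2.** For every `i ≥ 0` and every state `s`, `V_i(s) = V⁻_i(F(s))`. -/
theorem valueIteration_eq_reduced (i : ℕ) (s : RState) :
    Vit i s = Vred i (reduceF s) := by
  induction i generalizing s with
  | zero => rfl
  | succ i ih =>
    have hVit : Vit (i + 1) s = if sN s = 0 then 0 else sInf (bellmanValues s (Vred i)) := by
      simp only [Vit, bellmanValues, ih]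
    rw [hVit, Vred, sum_reduceF]
    split_ifs with hs
    · rfl
    · rw [← (ClusterEmbedding.ofReduceF s hs).bellmanValues_eq]
      rfl
end

section
/- Let s be a state such that the number of clusters containing exactly one terminal is at least s_N, and s_N ≥ 1. Then for every i ≥ 0 the value-iteration iterates satisfy V_i(s) = min(i, s_N); consequently lim_{i→∞} V_i(s) = s_N. Moreover, for every i ≥ 0 the infimum defining V_{i+1}(s) is attained by the deterministic action that assigns transmission probability 1 to one cluster containing exactly one terminal and probability 0 to all other clusters. -/
open scoped BigOperators

/-!
Every slot removes at most one terminal from the count `s_N`: an idle slot removes none, a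
success one, and a collision only moves the colliding terminals into a new cluster. Since the
splitting weights of an action form a probability distribution, induction on `i` gives
`min(i, s_N) ≤ V_i` on every state. On a state with at least `s_N` singleton clusters,
transmitting deterministically in one singleton cluster succeeds with probability one and leads
to a state with one terminal and one singleton cluster fewer, so the bound is attained there.
-/

open Finset

/-- `expectStep s p G` is `∑_{s'} P(s' | s, p) G(s')`, written as a sum over outcomes. -/
noncomputable def expectStep (s : RState) (p : ℕ → ℝ) (G : RState → ℝ) : ℝ :=
  ∑ f : Outcome s, w s.2 (outEta f) p * G (step s (outEta f))

def singletons (s : RState) : Finset (Fin (s.1 + 1)) :=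
  univ.filter fun j => s.2 j = 1

def singletonAction (k : ℕ) : ℕ → ℝ := fun j => if j = k then 1 else 0

def removeCluster (s : RState) (k : Fin (s.1 + 1)) : RState :=
  ⟨s.1, Function.update s.2 k 0⟩

/-- The outcome in which every terminal of cluster `k` transmits and no other terminal does. -/
def transmitOnly (s : RState) (k : Fin (s.1 + 1)) : Outcome s :=
  fun j => ⟨if j = k then 0 else s.2 j, by split <;> omega⟩

section Weights

variable {s : RState} {p : ℕ → ℝ}

lemma isActionOn_singletonAction (M k : ℕ) : IsActionOn M (singletonAction k) := by
  intro j _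
  unfold singletonAction
  split <;> norm_num

lemma w_nonneg (hp : IsActionOn (s.1 + 1) p) (f : Outcome s) : 0 ≤ w s.2 (outEta f) p := by
  refine prod_nonneg fun j _ => ?_
  obtain ⟨h0, h1⟩ := hp j j.isLt
  have : 0 ≤ 1 - p j := by linarith
  positivity

/-- The sum over outcomes factors over the clusters, and each factor is the binomial expansion
of `((1 - p) + p) ^ n`. -/
lemma sum_w_eq_one (s : RState) (p : ℕ → ℝ) : ∑ f : Outcome s, w s.2 (outEta f) p = 1 := by
  have hprod : ∑ f : Outcome s, w s.2 (outEta f) p = ∏ j : Fin (s.1 + 1),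
      ∑ c : Fin (s.2 j + 1), (s.2 j).choose c * (1 - p j) ^ (c : ℕ) * p j ^ (s.2 j - c) := by
    rw [Fintype.prod_sum]
    rfl
  rw [hprod, prod_eq_one fun j _ => ?_]
  calc _ = ∑ c ∈ range (s.2 j + 1), (s.2 j).choose c * (1 - p j) ^ c * p j ^ (s.2 j - c) :=
        Fin.sum_univ_eq_sum_range (fun c => (s.2 j).choose c * (1 - p j) ^ c * p j ^ (s.2 j - c)) _
    _ = (1 - p j + p j) ^ s.2 j := by
        rw [add_pow]
        exact sum_congr rfl fun c _ => by ring
    _ = 1 := by rw [sub_add_cancel, one_pow]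

lemma le_expectStep {G : RState → ℝ} {c : ℝ} (hp : IsActionOn (s.1 + 1) p)
    (hc : ∀ f : Outcome s, c ≤ G (step s (outEta f))) : c ≤ expectStep s p G :=
  calc c = ∑ f : Outcome s, w s.2 (outEta f) p * c := by rw [← sum_mul, sum_w_eq_one, one_mul]
    _ ≤ expectStep s p G := sum_le_sum fun f _ => mul_le_mul_of_nonneg_left (hc f) (w_nonneg hp f)

lemma w_singletonAction (k : Fin (s.1 + 1)) (f : Outcome s) :
    w s.2 (outEta f) (singletonAction k) = if f = transmitOnly s k then 1 else 0 := by
  split_ifs with hf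
  · subst hf
    refine prod_eq_one fun j _ => ?_
    by_cases hj : j = k
    · simp [outEta, transmitOnly, singletonAction, hj]
    · simp [outEta, transmitOnly, singletonAction, hj, Fin.val_ne_of_ne hj]
  · obtain ⟨j, hj⟩ := Function.ne_iff.mp hf
    refine prod_eq_zero (mem_univ j) ?_
    by_cases hjk : j = k
    · have hsilent : (f j : ℕ) ≠ 0 := fun h0 => hj (Fin.ext (by simp [transmitOnly, hjk, h0]))
      simp [outEta, singletonAction, hjk, zero_pow hsilent]
    · have hle := Fin.is_le (f j)
      have hne : (f j : ℕ) ≠ s.2 j := fun h0 => hj (Fin.ext (by simp [transmitOnly, hjk, h0]))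
      have htransmit : s.2 j - f j ≠ 0 := by omega
      simp [outEta, singletonAction, Fin.val_ne_of_ne hjk, zero_pow htransmit]

lemma expectStep_singletonAction (k : Fin (s.1 + 1)) (G : RState → ℝ) :
    expectStep s (singletonAction k) G = G (step s (outEta (transmitOnly s k))) := by
  simp [expectStep, w_singletonAction]

end Weights

section Counting

variable {s : RState}

lemma sN_le_sN_step_add_one {η' : Fin (s.1 + 1) → ℕ} (hη' : ∀ j, η' j ≤ s.2 j) :
    sN s ≤ sN (step s η') + 1 := by
  have hsplit : ∑ j, η' j + ∑ j, (s.2 j - η' j) = sN s := by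
    rw [← sum_add_distrib]
    exact sum_congr rfl fun j _ => Nat.add_sub_cancel' (hη' j)
  unfold step
  split_ifs
  · change sN s ≤ ∑ j, η' j + 1
    omega
  · change sN s ≤ ∑ j, Fin.snoc (α := fun _ => ℕ) η' (∑ j, (s.2 j - η' j)) j + 1
    rw [Fin.sum_univ_castSucc]
    simp only [Fin.snoc_castSucc, Fin.snoc_last]
    omega

lemma step_transmitOnly {k : Fin (s.1 + 1)} (hk : s.2 k ≤ 1) :
    step s (outEta (transmitOnly s k)) = removeCluster s k := by
  have hη' : outEta (transmitOnly s k) = Function.update s.2 k 0 := by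
    ext j
    by_cases hj : j = k <;> simp [outEta, transmitOnly, hj]
  have htx : ∑ j, (s.2 j - Function.update s.2 k 0 j) = s.2 k := by
    rw [sum_eq_single k (fun j _ hj => by simp [hj]) (by simp)]
    simp
  rw [hη', step, htx, if_pos hk]
  rfl

lemma sN_removeCluster_add (k : Fin (s.1 + 1)) : sN (removeCluster s k) + s.2 k = sN s := by
  unfold sN removeCluster
  rw [sum_update_of_mem (mem_univ k), sdiff_singleton_eq_erase, zero_add,
    sum_erase_add _ _ (mem_univ k)]

lemma card_singletons_removeCluster_add_one {k : Fin (s.1 + 1)} (hk : k ∈ singletons s) :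
    #(singletons (removeCluster s k)) + 1 = #(singletons s) := by
  have herase : univ.filter (fun j => Function.update s.2 k 0 j = 1) = (singletons s).erase k := by
    ext j
    by_cases hj : j = k <;> simp [singletons, hj]
  change #(univ.filter fun j => Function.update s.2 k 0 j = 1) + 1 = _
  rw [herase, card_erase_add_one hk]

lemma sN_removeCluster_le_card_singletons {k : Fin (s.1 + 1)} (hk : k ∈ singletons s)
    (hG : sN s ≤ #(singletons s)) : sN (removeCluster s k) ≤ #(singletons (removeCluster s k)) := by
  have hsN := sN_removeCluster_add (s := s) k
  have hcard := card_singletons_removeCluster_add_one hk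
  have hk1 : s.2 k = 1 := (mem_filter.mp hk).2
  omega

end Counting

section ValueIteration

variable {s : RState} {i : ℕ}

lemma Vit_succ_of_sN_ne_zero (h : sN s ≠ 0) :
    Vit (i + 1) s = sInf {x | ∃ p, IsActionOn (s.1 + 1) p ∧ x = 1 + expectStep s p (Vit i)} := by
  rw [Vit, if_neg h]
  rfl

lemma min_le_one_add_expectStep {G : RState → ℝ} (hG : ∀ t, min (i : ℝ) (sN t) ≤ G t)
    {p : ℕ → ℝ} (hp : IsActionOn (s.1 + 1) p) :
    min (i + 1 : ℝ) (sN s) ≤ 1 + expectStep s p G := by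
  have hstep : ∀ f : Outcome s, min (i : ℝ) (sN s - 1) ≤ G (step s (outEta f)) := fun f => by
    have hsN : (sN s : ℝ) ≤ sN (step s (outEta f)) + 1 :=
      mod_cast sN_le_sN_step_add_one fun j => Fin.is_le (f j)
    exact (min_le_min le_rfl (by linarith)).trans (hG _)
  have hexp := le_expectStep hp hstep
  have hmin : min (i + 1 : ℝ) (sN s) = min (i : ℝ) (sN s - 1) + 1 := by
    rw [← min_add_add_right, sub_add_cancel]
  linarith

lemma min_le_Vit : ∀ (i : ℕ) (t : RState), min (i : ℝ) (sN t) ≤ Vit i t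
  | 0, _ => by simp [Vit]
  | i + 1, t => by
    by_cases h0 : sN t = 0
    · simp [Vit, h0]
    rw [Vit_succ_of_sN_ne_zero h0]
    refine le_csInf ⟨_, 0, fun _ _ => by norm_num, rfl⟩ ?_
    rintro x ⟨p, hp, rfl⟩
    exact_mod_cast min_le_one_add_expectStep (min_le_Vit i) hp

lemma one_add_expectStep_singletonAction {k : Fin (s.1 + 1)} (hk : s.2 k = 1)
    {G : RState → ℝ} (hG : G (removeCluster s k) = min (i : ℝ) (sN (removeCluster s k))) :
    1 + expectStep s (singletonAction k) G = min (i + 1 : ℝ) (sN s) := by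
  have hsN : (sN (removeCluster s k) : ℝ) + 1 = sN s := by
    exact_mod_cast hk ▸ sN_removeCluster_add k
  rw [expectStep_singletonAction, step_transmitOnly hk.le, hG, ← hsN, min_add_add_right]
  ring

theorem Vit_eq_min_of_sN_le_card_singletons :
    ∀ (i : ℕ) (t : RState), sN t ≤ #(singletons t) → Vit i t = min (i : ℝ) (sN t)
  | 0, _, _ => by simp [Vit]
  | i + 1, t, hG => by
    by_cases h0 : sN t = 0
    · simp [Vit, h0]
      positivity
    obtain ⟨k, hk⟩ : (singletons t).Nonempty := card_pos.mp (by omega)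
    have hval := one_add_expectStep_singletonAction (mem_filter.mp hk).2
      (Vit_eq_min_of_sN_le_card_singletons i _ (sN_removeCluster_le_card_singletons hk hG))
    rw [Vit_succ_of_sN_ne_zero h0]
    push_cast
    refine IsLeast.csInf_eq ⟨⟨_, isActionOn_singletonAction _ k, hval.symm⟩, ?_⟩
    rintro x ⟨p, hp, rfl⟩
    exact min_le_one_add_expectStep (min_le_Vit i) hp

end ValueIteration

theorem valueIteration_singletonPolicy_general (s : RState)
    (hG : sN s ≤ (Finset.univ.filter (fun j => s.2 j = 1)).card) :
    (∀ i : ℕ, Vit i s = min (i : ℝ) (sN s : ℝ)) ∧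
    Filter.Tendsto (fun i => Vit i s) Filter.atTop (nhds (sN s : ℝ)) ∧
    (∀ i : ℕ, ∀ k : Fin (s.1 + 1), s.2 k = 1 →
      Vit (i + 1) s = 1 + ∑ f : Outcome s,
        w s.2 (outEta f) (fun j => if j = k.val then 1 else 0)
          * Vit i (step s (outEta f))) := by
  have hV (i : ℕ) : Vit i s = min (i : ℝ) (sN s) := Vit_eq_min_of_sN_le_card_singletons i s hG
  refine ⟨hV, ?_, fun i k hk => ?_⟩
  · refine tendsto_const_nhds.congr' ?_
    filter_upwards [Filter.eventually_ge_atTop (sN s)] with i hi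
    rw [hV, min_eq_right (mod_cast hi)]
  · have hk' : k ∈ singletons s := mem_filter.mpr ⟨mem_univ k, hk⟩
    have hrem := Vit_eq_min_of_sN_le_card_singletons i _ (sN_removeCluster_le_card_singletons hk' hG)
    rw [hV]
    push_cast
    exact (one_add_expectStep_singletonAction hk hrem).symm

/-- **Theorem 3.** Let `s` be a state whose number of singleton clusters (clusters
containing exactly one terminal) is at least `s_N`, with `s_N ≥ 1`.  Then
`V_i(s) = min(i, s_N)` for every `i ≥ 0`, hence `V_i(s) → s_N` as `i → ∞`; moreover,
for every `i ≥ 0` the infimum defining `V_{i+1}(s)` is attained by the deterministic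
action transmitting with probability `1` in one singleton cluster `k` and with
probability `0` in all other clusters. -/
theorem valueIteration_singletonPolicy (s : RState)
    (hG : sN s ≤ (Finset.univ.filter (fun j => s.2 j = 1)).card)
    (hN : 1 ≤ sN s) :
    (∀ i : ℕ, Vit i s = min (i : ℝ) (sN s : ℝ)) ∧
    Filter.Tendsto (fun i => Vit i s) Filter.atTop (nhds (sN s : ℝ)) ∧
    (∀ i : ℕ, ∀ k : Fin (s.1 + 1), s.2 k = 1 →
      Vit (i + 1) s = 1 + ∑ f : Outcome s,
        w s.2 (outEta f) (fun j => if j = k.val then 1 else 0)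
          * Vit i (step s (outEta f))) :=
  valueIteration_singletonPolicy_general s hG
end

section
/- Let b be a belief state all of whose support states share the same cluster count M, whose support is contained in the set of states with s_N ≤ 1, and which assigns positive probability to at least one state with s_N = 1. Then for every i ≥ 1, the belief value-iteration iterates satisfy Ṽ_i(b) = 1, and the infimum defining Ṽ_i(b) is attained by the all-ones action p with p(j) = 1 for all j ≤ M. -/
open scoped BigOperators

/-- The three possible channel observations: `idle` (`c = 0`), `succ` (`c = 1`),
and `coll` (`c = e`). -/
inductive Obs : Type
  | idle : Obs
  | succ : Obs
  | coll : Obs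
  deriving DecidableEq

instance : Fintype Obs :=
  ⟨{Obs.idle, Obs.succ, Obs.coll}, fun x => by cases x <;> simp⟩

/-- The observation kernel `Q(o | s, s')`. -/
noncomputable def Qobs (o : Obs) (s s' : RState) : ℝ :=
  match o with
  | Obs.idle => if s' = s then 1 else 0
  | Obs.succ => if sN s' + 1 = sN s ∧ s'.1 = s.1 then 1 else 0
  | Obs.coll => if sN s' = sN s ∧ s'.1 = s.1 + 1 then 1 else 0

/-- The joint weight `b_p(s', o) = ∑_s Q(o | s, s') P(s' | s, p) b(s)`. -/
noncomputable def bJoint (b : RState → ℝ) (p : ℕ → ℝ) (o : Obs) (s' : RState) : ℝ :=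
  ∑ᶠ s : RState, Qobs o s s' * transP s p s' * b s

/-- The probability `b_p(o) = ∑_{s'} b_p(s', o)` of observing `o` from belief `b`
under action `p`. -/
noncomputable def bProb (b : RState → ℝ) (p : ℕ → ℝ) (o : Obs) : ℝ :=
  ∑ᶠ s' : RState, bJoint b p o s'

/-- The posterior belief `b^o_p(s') = b_p(s', o) / b_p(o)`. -/
noncomputable def bPost (b : RState → ℝ) (p : ℕ → ℝ) (o : Obs) : RState → ℝ :=
  fun s' => bJoint b p o s' / bProb b p o

open scoped Classical in
/-- The belief value-iteration iterates `Ṽ_i`: `Ṽ_0 = 0`; beliefs assigning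
probability `1` to target states have value `0`; otherwise `Ṽ_{i+1}(b)` is the
infimum over actions `p ∈ [0,1]^M` (`M` the common cluster count of the support of
`b`) of `1 + ∑_{o : b_p(o) > 0} b_p(o) Ṽ_i(b^o_p)`. -/
noncomputable def Vtil : ℕ → (RState → ℝ) → ℝ
  | 0, _ => 0
  | i + 1, b =>
    if ∀ s, sN s ≠ 0 → b s = 0 then 0
    else sInf { x : ℝ | ∃ m : ℕ, (∀ s, b s ≠ 0 → s.1 = m) ∧
      ∃ p : ℕ → ℝ, IsActionOn (m + 1) p ∧
        x = 1 + ∑ o : Obs,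
          if 0 < bProb b p o then bProb b p o * Vtil i (bPost b p o) else 0 }

/-! Under the all-ones action every terminal transmits, so from a state with at most one active
terminal the process moves deterministically to the empty state with the same clusters. Hence
every posterior is concentrated on target states and costs nothing, so the all-ones action has
cost exactly `1`, while no action can cost less than the unit cost of one slot. -/

noncomputable def beliefCost (i : ℕ) (b : RState → ℝ) (p : ℕ → ℝ) : ℝ :=
  1 + ∑ o : Obs, if 0 < bProb b p o then bProb b p o * Vtil i (bPost b p o) else 0

def IsTargetBelief (b : RState → ℝ) : Prop := ∀ s, sN s ≠ 0 → b s = 0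

lemma Vtil_of_isTargetBelief {b : RState → ℝ} (hb : IsTargetBelief b) (i : ℕ) :
    Vtil i b = 0 := by
  cases i with
  | zero => rfl
  | succ i => exact if_pos hb

lemma Vtil_succ_of_not_isTargetBelief {b : RState → ℝ} (hb : ¬ IsTargetBelief b) (i : ℕ) :
    Vtil (i + 1) b = sInf {x | ∃ m : ℕ, (∀ s, b s ≠ 0 → s.1 = m) ∧
      ∃ p, IsActionOn (m + 1) p ∧ x = beliefCost i b p} :=
  if_neg hb

section Nonneg

lemma w_nonneg_s7 {M : ℕ} (η η' : Fin M → ℕ) {p : ℕ → ℝ} (hp : IsActionOn M p) :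
    0 ≤ w η η' p :=
  Finset.prod_nonneg fun i _ =>
    have ⟨h0, h1⟩ := hp i i.isLt
    mul_nonneg (mul_nonneg (Nat.cast_nonneg _) (pow_nonneg (sub_nonneg.2 h1) _)) (pow_nonneg h0 _)

lemma transP_nonneg (s : RState) {p : ℕ → ℝ} (hp : IsActionOn (s.1 + 1) p) (s' : RState) :
    0 ≤ transP s p s' :=
  Finset.sum_nonneg fun _ _ => by
    split
    · exact w_nonneg_s7 _ _ hp
    · exact le_rfl

lemma Qobs_nonneg (o : Obs) (s s' : RState) : 0 ≤ Qobs o s s' := by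
  cases o <;> (simp only [Qobs]; split <;> norm_num)

variable {b : RState → ℝ} (hb : ∀ s, 0 ≤ b s) {m : ℕ} (hM : ∀ s, b s ≠ 0 → s.1 = m)
  {p : ℕ → ℝ} (hp : IsActionOn (m + 1) p)
include hb hM hp

lemma bJoint_nonneg (o : Obs) (s' : RState) : 0 ≤ bJoint b p o s' := by
  refine finsum_nonneg fun s => ?_
  rcases eq_or_ne (b s) 0 with h | h
  · simp [h]
  · exact mul_nonneg (mul_nonneg (Qobs_nonneg o s s') (transP_nonneg s (hM s h ▸ hp) s')) (hb s)

lemma bPost_nonneg (o : Obs) (s' : RState) : 0 ≤ bPost b p o s' :=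
  div_nonneg (bJoint_nonneg hb hM hp o s') (finsum_nonneg (bJoint_nonneg hb hM hp o))

end Nonneg

lemma Vtil_nonneg (i : ℕ) : ∀ b : RState → ℝ, (∀ s, 0 ≤ b s) → 0 ≤ Vtil i b := by
  induction i with
  | zero => exact fun _ _ => le_rfl
  | succ i ih =>
    intro b hb
    by_cases htarget : IsTargetBelief b
    · exact (Vtil_of_isTargetBelief htarget _).ge
    rw [Vtil_succ_of_not_isTargetBelief htarget]
    refine Real.sInf_nonneg ?_
    rintro x ⟨m, hM, p, hp, rfl⟩
    refine add_nonneg zero_le_one (Finset.sum_nonneg fun o _ => ?_)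
    split
    · exact mul_nonneg (le_of_lt ‹_›) (ih _ (bPost_nonneg hb hM hp o))
    · exact le_rfl

lemma one_le_beliefCost {b : RState → ℝ} (hb : ∀ s, 0 ≤ b s) {m : ℕ}
    (hM : ∀ s, b s ≠ 0 → s.1 = m) {p : ℕ → ℝ} (hp : IsActionOn (m + 1) p) (i : ℕ) :
    1 ≤ beliefCost i b p := by
  refine le_add_of_nonneg_right (Finset.sum_nonneg fun o _ => ?_)
  split
  · exact mul_nonneg (le_of_lt ‹_›) (Vtil_nonneg i _ (bPost_nonneg hb hM hp o))
  · exact le_rfl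

lemma Vtil_succ_eq_one {b : RState → ℝ} (hb : ∀ s, 0 ≤ b s) (htarget : ¬ IsTargetBelief b)
    {m : ℕ} (hM : ∀ s, b s ≠ 0 → s.1 = m) {p : ℕ → ℝ} (hp : IsActionOn (m + 1) p) {i : ℕ}
    (hcost : beliefCost i b p = 1) : Vtil (i + 1) b = 1 := by
  rw [Vtil_succ_of_not_isTargetBelief htarget]
  refine IsLeast.csInf_eq ⟨⟨m, hM, p, hp, hcost.symm⟩, ?_⟩
  rintro x ⟨m', hM', p', hp', rfl⟩
  exact one_le_beliefCost hb hM' hp' i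

lemma w_allOnes {M : ℕ} (η η' : Fin M → ℕ) :
    w η η' (fun _ => 1) = if η' = 0 then 1 else 0 := by
  simp only [w, sub_self, one_pow, mul_one]
  split
  · next h => simp [h]
  · next h =>
    obtain ⟨i, hi⟩ := Function.ne_iff.1 h
    exact Finset.prod_eq_zero (Finset.mem_univ i) (by simp [zero_pow hi])

lemma transP_allOnes (s s' : RState) :
    transP s (fun _ => 1) s' = if step s 0 = s' then 1 else 0 := by
  have houtEta : ∀ f : Outcome s, outEta f = 0 ↔ f = 0 := fun f => by
    simp only [funext_iff, outEta, Pi.zero_apply, Fin.ext_iff, Fin.val_zero]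
  rw [transP, Fintype.sum_eq_single 0 fun f hf => by simp [w_allOnes, houtEta, hf]]
  simp [w_allOnes, (houtEta 0).2 rfl]

lemma step_zero_of_sN_le_one {s : RState} (hs : sN s ≤ 1) : step s 0 = ⟨s.1, 0⟩ :=
  if_pos (by simpa [sN] using hs)

lemma isTargetBelief_bPost_allOnes {b : RState → ℝ} (hle1 : ∀ s, b s ≠ 0 → sN s ≤ 1)
    (o : Obs) : IsTargetBelief (bPost b (fun _ => 1) o) := by
  intro s' hs'
  suffices bJoint b (fun _ => 1) o s' = 0 by simp [bPost, this]
  refine finsum_eq_zero_of_forall_eq_zero fun s => ?_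
  rcases eq_or_ne (b s) 0 with h | h
  · simp [h]
  · have hstep : step s 0 ≠ s' := by
      rw [step_zero_of_sN_le_one (hle1 s h)]
      rintro rfl
      exact hs' (by simp [sN])
    simp [transP_allOnes, hstep]

lemma beliefCost_allOnes {b : RState → ℝ} (hle1 : ∀ s, b s ≠ 0 → sN s ≤ 1) (i : ℕ) :
    beliefCost i b (fun _ => 1) = 1 := by
  simp [beliefCost, Vtil_of_isTargetBelief (isTargetBelief_bPost_allOnes hle1 _)]

theorem beliefValueIteration_oneActive_general (b : RState → ℝ) (m : ℕ)
    (hpos : ∀ s, 0 ≤ b s)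
    (hM : ∀ s, b s ≠ 0 → s.1 = m)
    (hle1 : ∀ s, b s ≠ 0 → sN s ≤ 1)
    (hone : ∃ s, 0 < b s ∧ sN s = 1) :
    ∀ i : ℕ,
      Vtil (i + 1) b = 1 ∧
      Vtil (i + 1) b = 1 + ∑ o : Obs,
        (if 0 < bProb b (fun _ => 1) o
         then bProb b (fun _ => 1) o * Vtil i (bPost b (fun _ => 1) o) else 0) := by
  intro i
  obtain ⟨s, hs, hsN⟩ := hone
  have htarget : ¬ IsTargetBelief b := fun h => hs.ne' (h s (by omega))
  have hcost : beliefCost i b (fun _ => 1) = 1 := beliefCost_allOnes hle1 i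
  have hV : Vtil (i + 1) b = 1 :=
    Vtil_succ_eq_one hpos htarget hM (fun _ _ => ⟨zero_le_one, le_rfl⟩) hcost
  exact ⟨hV, hV.trans hcost.symm⟩

/-- **Theorem 1.** Let `b` be a belief state (finitely supported probability
distribution over states) whose support states all share the same cluster count,
are all states with at most one active terminal, and which assigns positive
probability to at least one state with exactly one active terminal.  Then for every
`i ≥ 1` the belief value-iteration iterates satisfy `Ṽ_i(b) = 1`, and the infimum
defining `Ṽ_i(b)` is attained by the all-ones action `p ≡ 1`. -/
theorem beliefValueIteration_oneActive (b : RState → ℝ) (m : ℕ)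
    (hfin : (Function.support b).Finite)
    (hpos : ∀ s, 0 ≤ b s)
    (hsum : ∑ᶠ s, b s = 1)
    (hM : ∀ s, b s ≠ 0 → s.1 = m)
    (hle1 : ∀ s, b s ≠ 0 → sN s ≤ 1)
    (hone : ∃ s, 0 < b s ∧ sN s = 1) :
    ∀ i : ℕ,
      Vtil (i + 1) b = 1 ∧
      Vtil (i + 1) b = 1 + ∑ o : Obs,
        (if 0 < bProb b (fun _ => 1) o
         then bProb b (fun _ => 1) o * Vtil i (bPost b (fun _ => 1) o) else 0) :=
  beliefValueIteration_oneActive_general b m hpos hM hle1 hone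
end
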